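/- Let z ∈ ℝ satisfy z > 1 or z < −3, and let (x_s)_{s≥0} be the sequence defined by x₀ = z and x_{s+1} = (6 + 6z + 3x_s + z²x_s)/(7 + 4z + z² + 2x_s + 2z·x_s). Then for every s ≥ 0 there exists a nonzero real number c_s such that M(z)^{2s+1} = c_s · M(x_s) as 4×4 real matrices. -/

import Mathlib

/-!
Right multiplication by `M(z)²` maps the family of nonzero multiples `d • M(t)` to itself,
acting on `t` by the Möbius map `x ↦ N(z, x) / D(z, x)` of the recursion. The identities
`N - D = (z - 1)² (x - 1)` and `N + 3 D = (z + 3)² (x + 3)` show that this map preserves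
`(1, ∞)` when `z > 1` and `(-∞, -3)` when `z < -3`, and on these half-lines the denominator
`D = (z + 2)² + 3 + 2 (z + 1) x` is positive.
-/

/-- For a scalar `t`, the 4×4 matrix `[[t,1,1,1],[1,1,t,1],[1,t,1,1],[1,1,1,t]]`. -/
def Mmat (t : ℝ) : Matrix (Fin 4) (Fin 4) ℝ :=
  !![t, 1, 1, 1; 1, 1, t, 1; 1, t, 1, 1; 1, 1, 1, t]

namespace Mmat

/-- `d • M(a / d)` written without division. -/
def scaled (a d : ℝ) : Matrix (Fin 4) (Fin 4) ℝ :=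
  !![a, d, d, d; d, d, a, d; d, a, d, d; d, d, d, a]

def stepNum (z x : ℝ) : ℝ := 6 + 6 * z + 3 * x + z ^ 2 * x

def stepDen (z x : ℝ) : ℝ := 7 + 4 * z + z ^ 2 + 2 * x + 2 * z * x

lemma mul_sq (x z : ℝ) : Mmat x * Mmat z ^ 2 = scaled (stepNum z x) (stepDen z x) := by
  ext i j
  fin_cases i <;> fin_cases j <;>
    simp [Mmat, scaled, stepNum, stepDen, sq, Matrix.mul_apply, Fin.sum_univ_four] <;> ring

lemma smul_div {d : ℝ} (a : ℝ) (hd : d ≠ 0) : d • Mmat (a / d) = scaled a d := by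
  ext i j
  fin_cases i <;> fin_cases j <;> simp [Mmat, scaled, mul_div_cancel₀ _ hd]

theorem pow_odd_eq_smul (z : ℝ) (x : ℕ → ℝ) (hx0 : x 0 = z)
    (hxs : ∀ s, x (s + 1) = stepNum z (x s) / stepDen z (x s))
    (hd : ∀ s, stepDen z (x s) ≠ 0) (s : ℕ) :
    ∃ c : ℝ, c ≠ 0 ∧ Mmat z ^ (2 * s + 1) = c • Mmat (x s) := by
  induction s with
  | zero => exact ⟨1, one_ne_zero, by simp [hx0]⟩
  | succ n ih =>
    obtain ⟨c, hc, h⟩ := ih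
    refine ⟨c * stepDen z (x n), mul_ne_zero hc (hd n), ?_⟩
    rw [show 2 * (n + 1) + 1 = (2 * n + 1) + 2 by ring, pow_add, h, smul_mul_assoc, mul_sq,
      ← smul_div _ (hd n), smul_smul, hxs]

def Admissible (z x : ℝ) : Prop := (1 < z ∧ 1 < x) ∨ (z < -3 ∧ x < -3)

lemma Admissible.stepDen_pos {z x : ℝ} (h : Admissible z x) : 0 < stepDen z x := by
  unfold stepDen
  rcases h with ⟨hz, hx⟩ | ⟨hz, hx⟩
  · nlinarith [sq_nonneg (z + 2), mul_pos (by linarith : (0 : ℝ) < z + 1) (by linarith : 0 < x)]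
  · nlinarith [sq_nonneg (z + 2), mul_pos (by linarith : (0 : ℝ) < -(z + 1))
      (by linarith : (0 : ℝ) < -x)]

lemma Admissible.step {z x : ℝ} (h : Admissible z x) :
    Admissible z (stepNum z x / stepDen z x) := by
  have hD := h.stepDen_pos
  have hlow : stepNum z x - stepDen z x = (z - 1) ^ 2 * (x - 1) := by
    unfold stepNum stepDen; ring
  have hhigh : stepNum z x + 3 * stepDen z x = (z + 3) ^ 2 * (x + 3) := by
    unfold stepNum stepDen; ring
  rcases h with ⟨hz, hx⟩ | ⟨hz, hx⟩
  · refine Or.inl ⟨hz, (one_lt_div hD).2 ?_⟩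
    linarith [mul_pos (pow_pos (sub_pos.2 hz) 2) (sub_pos.2 hx)]
  · refine Or.inr ⟨hz, (div_lt_iff₀ hD).2 ?_⟩
    linarith [mul_pos (pow_pos (by linarith : (0 : ℝ) < -(z + 3)) 2)
      (by linarith : (0 : ℝ) < -(x + 3))]

end Mmat

/-- for the interpolation sequence `(x_s)` starting at `z` with
`z > 1` or `z < -3`, the odd matrix power `M(z)^(2s+1)` is a nonzero scalar
multiple of `M(x_s)`. -/
theorem stmt8 (z : ℝ) (hz : 1 < z ∨ z < -3) (x : ℕ → ℝ)
    (hx0 : x 0 = z)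
    (hxs : ∀ s : ℕ, x (s + 1) =
      (6 + 6 * z + 3 * x s + z ^ 2 * x s) /
        (7 + 4 * z + z ^ 2 + 2 * x s + 2 * z * x s)) :
    ∀ s : ℕ, ∃ c : ℝ, c ≠ 0 ∧ Mmat z ^ (2 * s + 1) = c • Mmat (x s) := by
  have hadm : ∀ s, Mmat.Admissible z (x s) := by
    intro s
    induction s with
    | zero => rw [hx0]; exact hz.imp (fun h => ⟨h, h⟩) (fun h => ⟨h, h⟩)
    | succ n ih => rw [hxs]; exact ih.step
  exact Mmat.pow_odd_eq_smul z x hx0 hxs fun s => (hadm s).stepDen_pos.ne'
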